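/- arXiv:2303.03871 — 3 statements merged into one kernel-verified Lean document; each statement's English description precedes it below -/
import Mathlib

section
/- The set L(2ℕ+1) = { x ∈ ℓ∞ : |L_x| is odd and ≥ 3 } is not densely lineable: L(2ℕ+1) ∪ {0} contains no dense infinite-dimensional subspace of ℓ∞. -/
open Filter Topology Set ENNReal

noncomputable section

/-- The set of accumulation points of a real sequence: limits of convergent subsequences. -/
def accPts (x : ℕ → ℝ) : Set ℝ :=
  {a | ∃ φ : ℕ → ℕ, StrictMono φ ∧ Tendsto (fun k => x (φ k)) atTop (𝓝 a)}


/-- The space ℓ∞ of bounded real sequences. -/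
abbrev Linf : Type := ↥(lp (fun _ : ℕ => ℝ) ∞)

/-- Accumulation points of an element of ℓ∞. -/
def accPtsL (z : Linf) : Set ℝ := accPts (fun n => z n)

/-!
Suppose `M` is such a subspace. Pick `f ∈ M` close to the constant sequence `1`: its set `A` of
accumulation points is finite with at least three elements; let `a₁, a₂` be a closest pair in
`A`. Pick `v ∈ M` within `1 / 8` of `φ ∘ f`, where `φ` is a bump equal to `1` at `a₁` and
vanishing on the rest of `A`. The accumulation points of `c • f + v` are the images of the finite
set `J` of joint accumulation points of `(f, v)` under `(a, b) ↦ c * a + b`. For all but finitely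
many `c` this map is injective on `J`, while for a suitable `c` close to `1 / (a₂ - a₁)` it
identifies exactly one pair of points of `J`. The two accumulation sets have consecutive
cardinalities, so they are not both odd.
-/

open Bornology

def jointAccPts (x y : ℕ → ℝ) : Set (ℝ × ℝ) :=
  {p | ∃ φ : ℕ → ℕ, StrictMono φ ∧ Tendsto (fun k => (x (φ k), y (φ k))) atTop (𝓝 p)}

section AccumulationPoints

variable {x y : ℕ → ℝ}

lemma le_of_mem_accPts {C a : ℝ} (h : ∀ n, x n ≤ C) (ha : a ∈ accPts x) : a ≤ C := by
  obtain ⟨φ, -, hφ⟩ := ha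
  exact le_of_tendsto' hφ fun k => h (φ k)

lemma accPts_const (a : ℝ) : accPts (fun _ => a) = {a} := by
  ext b
  refine ⟨fun ⟨_, _, hb⟩ => tendsto_nhds_unique hb tendsto_const_nhds, ?_⟩
  rintro rfl
  exact ⟨id, strictMono_id, tendsto_const_nhds⟩

lemma apply_mem_accPts_of_mem_jointAccPts {g : ℝ × ℝ → ℝ} (hg : Continuous g) {p : ℝ × ℝ}
    (hp : p ∈ jointAccPts x y) : g p ∈ accPts (fun n => g (x n, y n)) := by
  obtain ⟨φ, hφ, hp⟩ := hp
  exact ⟨φ, hφ, (hg.tendsto p).comp hp⟩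

lemma accPts_comp_eq_image (hx : IsBounded (range x)) (hy : IsBounded (range y))
    {g : ℝ × ℝ → ℝ} (hg : Continuous g) :
    accPts (fun n => g (x n, y n)) = g '' jointAccPts x y := by
  refine Subset.antisymm ?_
    (image_subset_iff.2 fun p hp => apply_mem_accPts_of_mem_jointAccPts hg hp)
  rintro t ⟨φ, hφ, ht⟩
  obtain ⟨p, -, ψ, hψ, hp⟩ := tendsto_subseq_of_bounded (hx.prod hy)
    (x := fun k => (x (φ k), y (φ k))) fun k => ⟨mem_range_self _, mem_range_self _⟩
  exact ⟨p, ⟨φ ∘ ψ, hφ.comp hψ, hp⟩,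
    tendsto_nhds_unique ((hg.tendsto p).comp hp) (ht.comp hψ.tendsto_atTop)⟩

lemma jointAccPts_subset_prod : jointAccPts x y ⊆ accPts x ×ˢ accPts y := fun _ hp =>
  ⟨apply_mem_accPts_of_mem_jointAccPts continuous_fst hp,
    apply_mem_accPts_of_mem_jointAccPts continuous_snd hp⟩

lemma exists_mem_jointAccPts (hy : IsBounded (range y)) {a : ℝ} (ha : a ∈ accPts x) :
    ∃ b, (a, b) ∈ jointAccPts x y := by
  obtain ⟨φ, hφ, ha⟩ := ha
  obtain ⟨b, -, ψ, hψ, hb⟩ := tendsto_subseq_of_bounded hy (x := y ∘ φ) fun k => mem_range_self _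
  exact ⟨b, φ ∘ ψ, hφ.comp hψ, (ha.comp hψ.tendsto_atTop).prodMk_nhds hb⟩

lemma abs_sub_le_of_mem_jointAccPts {φ : ℝ → ℝ} (hφ : Continuous φ) {δ : ℝ}
    (h : ∀ n, |y n - φ (x n)| ≤ δ) {p : ℝ × ℝ} (hp : p ∈ jointAccPts x y) :
    |p.2 - φ p.1| ≤ δ :=
  le_of_mem_accPts h (apply_mem_accPts_of_mem_jointAccPts (g := fun p => |p.2 - φ p.1|)
    (by fun_prop) hp)

end AccumulationPoints

lemma Set.Finite.exists_closest_pair {X : Type*} [PseudoMetricSpace X] {A : Set X} (hA : A.Finite)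
    (h : 1 < A.ncard) :
    ∃ a₁ ∈ A, ∃ a₂ ∈ A, a₁ ≠ a₂ ∧ ∀ a ∈ A, ∀ a' ∈ A, a ≠ a' → dist a₁ a₂ ≤ dist a a' := by
  obtain ⟨a, b, ha, hb, hab⟩ := (one_lt_ncard_iff hA).1 h
  obtain ⟨⟨a₁, a₂⟩, ⟨h₁, h₂, hne⟩, hmin⟩ :=
    exists_min_image A.offDiag (fun p => dist p.1 p.2) hA.offDiag ⟨(a, b), ha, hb, hab⟩
  exact ⟨a₁, h₁, a₂, h₂, hne, fun a ha a' ha' h => hmin (a, a') ⟨ha, ha', h⟩⟩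

def obliqueProj (c : ℝ) (p : ℝ × ℝ) : ℝ := c * p.1 + p.2

lemma continuous_obliqueProj (c : ℝ) : Continuous (obliqueProj c) := by
  unfold obliqueProj; fun_prop

lemma eq_of_obliqueProj_eq_of_fst_eq {c : ℝ} {p q : ℝ × ℝ}
    (h : obliqueProj c p = obliqueProj c q) (h₁ : p.1 = q.1) : p = q :=
  Prod.ext h₁ (by simpa [obliqueProj, h₁] using h)

lemma exists_injOn_obliqueProj {J : Set (ℝ × ℝ)} (hJ : J.Finite) :
    ∃ c, InjOn (obliqueProj c) J := by
  obtain ⟨c, hc⟩ := ((hJ.prod hJ).image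
    fun pq : (ℝ × ℝ) × (ℝ × ℝ) => (pq.2.2 - pq.1.2) / (pq.1.1 - pq.2.1)).exists_notMem
  refine ⟨c, fun p hp q hq hpq => ?_⟩
  by_contra hne
  have h₁ : p.1 - q.1 ≠ 0 := sub_ne_zero.2 fun h => hne (eq_of_obliqueProj_eq_of_fst_eq hpq h)
  refine hc ⟨(p, q), ⟨hp, hq⟩, ?_⟩
  rw [div_eq_iff h₁]
  simp only [obliqueProj] at hpq
  linarith

lemma ncard_image_obliqueProj_add_one {J : Set (ℝ × ℝ)} (hJ : J.Finite) {c a₁ a₂ b₁ b₂ : ℝ}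
    (ha : a₁ ≠ a₂) (hb₁ : (a₁, b₁) ∈ J) (hb₂ : (a₂, b₂) ∈ J)
    (hmax : ∀ b, (a₁, b) ∈ J → b ≤ b₁) (hmin : ∀ b, (a₂, b) ∈ J → b₂ ≤ b)
    (hc : obliqueProj c (a₁, b₁) = obliqueProj c (a₂, b₂))
    (hcoll : ∀ p ∈ J, ∀ q ∈ J, obliqueProj c p = obliqueProj c q →
      p = q ∨ (p.1 = a₁ ∧ q.1 = a₂) ∨ (p.1 = a₂ ∧ q.1 = a₁)) :
    (obliqueProj c '' J).ncard + 1 = J.ncard := by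
  have himage : obliqueProj c '' J = obliqueProj c '' (J \ {(a₂, b₂)}) := by
    refine Subset.antisymm ?_ (image_mono sdiff_subset)
    rintro _ ⟨p, hp, rfl⟩
    by_cases hp₂ : p = (a₂, b₂)
    · exact ⟨(a₁, b₁), ⟨hb₁, by simp [ha]⟩, hp₂ ▸ hc⟩
    · exact ⟨p, ⟨hp, hp₂⟩, rfl⟩
  have hext : ∀ p ∈ J, ∀ q ∈ J, p.1 = a₁ → q.1 = a₂ →
      obliqueProj c p = obliqueProj c q → q = (a₂, b₂) := by
    rintro ⟨_, b⟩ hp ⟨_, b'⟩ hq rfl rfl hpq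
    have := hmax b hp
    have := hmin b' hq
    simp only [obliqueProj] at hc hpq
    exact Prod.ext rfl (by dsimp; linarith)
  have hinj : InjOn (obliqueProj c) (J \ {(a₂, b₂)}) := by
    rintro p ⟨hp, hp₂⟩ q ⟨hq, hq₂⟩ hpq
    rcases hcoll p hp q hq hpq with h | ⟨h₁, h₂⟩ | ⟨h₂, h₁⟩
    · exact h
    · exact absurd (hext p hp q hq h₁ h₂ hpq) hq₂
    · exact absurd (hext q hq p hp h₁ h₂ hpq.symm) hp₂
  rw [himage, hinj.ncard_image, ncard_sdiff_singleton_add_one hb₂ hJ]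

lemma eq_or_fibers_of_obliqueProj_eq {A : Set ℝ} {J : Set (ℝ × ℝ)} {a₁ a₂ c : ℝ} (ha₂ : a₂ ∈ A)
    (hgap : ∀ a ∈ A, ∀ a' ∈ A, a ≠ a' → dist a₁ a₂ ≤ dist a a')
    (hJA : ∀ p ∈ J, p.1 ∈ A) (h₁ : ∀ p ∈ J, p.1 = a₁ → |p.2 - 1| ≤ 1 / 8)
    (h₀ : ∀ p ∈ J, p.1 ≠ a₁ → |p.2| ≤ 1 / 8) (hc : |c * (a₂ - a₁) - 1| ≤ 1 / 4)
    {p q : ℝ × ℝ} (hp : p ∈ J) (hq : q ∈ J) (hpq : obliqueProj c p = obliqueProj c q) :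
    p = q ∨ (p.1 = a₁ ∧ q.1 = a₂) ∨ (p.1 = a₂ ∧ q.1 = a₁) := by
  have hc' := abs_le.1 hc
  have hsep : ∀ a ∈ A, ∀ a' ∈ A, a ≠ a' → 3 / 4 ≤ |c * (a - a')| := by
    intro a ha a' ha' hne
    calc 3 / 4 ≤ |c * (a₂ - a₁)| := le_abs.2 (Or.inl (by linarith))
      _ = |c| * dist a₁ a₂ := by rw [abs_mul, Real.dist_eq, abs_sub_comm]
      _ ≤ |c| * dist a a' := by gcongr; exact hgap a ha a' ha' hne
      _ = |c * (a - a')| := by rw [abs_mul, Real.dist_eq]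
  have hfib : ∀ p ∈ J, ∀ q ∈ J, obliqueProj c p = obliqueProj c q →
      q.1 ≠ a₁ → q.1 ≠ a₂ → p.1 = q.1 := by
    intro p hp q hq hpq hq₁ hq₂
    by_contra hne
    have hq₀ := abs_le.1 (h₀ q hq hq₁)
    simp only [obliqueProj] at hpq
    by_cases hp₁ : p.1 = a₁
    · have hp₁' := abs_le.1 (h₁ p hp hp₁)
      have hsep' := hsep a₂ ha₂ q.1 (hJA q hq) (Ne.symm hq₂)
      rw [← hp₁] at hc'
      rcases le_abs'.1 hsep' with h | h <;> linarith
    · have hp₀ := abs_le.1 (h₀ p hp hp₁)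
      have hsep' := hsep p.1 (hJA p hp) q.1 (hJA q hq) hne
      rcases le_abs'.1 hsep' with h | h <;> linarith
  by_cases hpq' : p = q
  · exact Or.inl hpq'
  have hne : p.1 ≠ q.1 := fun h => hpq' (eq_of_obliqueProj_eq_of_fst_eq hpq h)
  have hq' : q.1 = a₁ ∨ q.1 = a₂ := by
    by_contra! h
    exact hne (hfib p hp q hq hpq h.1 h.2)
  have hp' : p.1 = a₁ ∨ p.1 = a₂ := by
    by_contra! h
    exact hne (hfib q hq p hp hpq.symm h.1 h.2).symm
  right
  rcases hp' with h | h <;> rcases hq' with h' | h' <;> simp_all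

lemma exists_ncard_image_obliqueProj_eq_add_one {A : Set ℝ} {J : Set (ℝ × ℝ)} {a₁ a₂ : ℝ}
    (hJ : J.Finite) (hne : a₁ ≠ a₂) (ha₂ : a₂ ∈ A)
    (hgap : ∀ a ∈ A, ∀ a' ∈ A, a ≠ a' → dist a₁ a₂ ≤ dist a a')
    (hJA : ∀ p ∈ J, p.1 ∈ A) (h₁ : ∀ p ∈ J, p.1 = a₁ → |p.2 - 1| ≤ 1 / 8)
    (h₀ : ∀ p ∈ J, p.1 ≠ a₁ → |p.2| ≤ 1 / 8)
    (hJ₁ : ∃ b, (a₁, b) ∈ J) (hJ₂ : ∃ b, (a₂, b) ∈ J) :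
    ∃ c c', (obliqueProj c '' J).ncard = (obliqueProj c' '' J).ncard + 1 := by
  have hfiber (a : ℝ) : {b | (a, b) ∈ J}.Finite :=
    (hJ.image Prod.snd).subset fun b hb => ⟨_, hb, rfl⟩
  obtain ⟨c, hc⟩ := exists_injOn_obliqueProj hJ
  obtain ⟨b₁, hb₁, hmax⟩ := exists_max_image _ id (hfiber a₁) hJ₁
  obtain ⟨b₂, hb₂, hmin⟩ := exists_min_image _ id (hfiber a₂) hJ₂
  have hb₁' := abs_le.1 (h₁ _ hb₁ rfl)
  have hb₂' := abs_le.1 (h₀ _ hb₂ hne.symm)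
  -- `c'` sends the top of the fibre over `a₁` and the bottom of the fibre over `a₂` to one point
  set c' := (b₁ - b₂) / (a₂ - a₁)
  have hc' : c' * (a₂ - a₁) = b₁ - b₂ := div_mul_cancel₀ _ (sub_ne_zero.2 hne.symm)
  refine ⟨c, c', ?_⟩
  rw [hc.ncard_image, ← ncard_image_obliqueProj_add_one (c := c') hJ hne hb₁ hb₂ hmax hmin
    (by simp only [obliqueProj]; linarith)]
  exact fun p hp q hq => eq_or_fibers_of_obliqueProj_eq ha₂ hgap hJA h₁ h₀
    (abs_le.2 ⟨by linarith, by linarith⟩) hp hq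

lemma isBounded_range_coe (z : Linf) : IsBounded (range (z : ℕ → ℝ)) :=
  isBounded_iff_forall_norm_le.2
    ⟨‖z‖, by rintro _ ⟨n, rfl⟩; exact lp.norm_apply_le_norm ENNReal.top_ne_zero z n⟩

lemma accPtsL_zero : accPtsL 0 = {0} := accPts_const 0

lemma accPtsL_smul_add (c : ℝ) (z w : Linf) :
    accPtsL (c • z + w) = obliqueProj c '' jointAccPts z w := by
  simp only [accPtsL, lp.coeFn_add, lp.coeFn_smul, Pi.add_apply, Pi.smul_apply, smul_eq_mul]
  exact accPts_comp_eq_image (isBounded_range_coe z) (isBounded_range_coe w)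
    (continuous_obliqueProj c)

lemma exists_mem_abs_sub_lt_of_dense {S : Set Linf} (hS : Dense S) {y : ℕ → ℝ} (hy : Memℓp y ∞)
    {ε : ℝ} (hε : 0 < ε) : ∃ v ∈ S, ∀ n, |v n - y n| < ε := by
  obtain ⟨v, hvS, hv⟩ := Metric.mem_closure_iff.1 (hS.closure_eq ▸ mem_univ (⟨y, hy⟩ : Linf)) ε hε
  refine ⟨v, hvS, fun n => ?_⟩
  calc |v n - y n| = ‖(v - ⟨y, hy⟩ : Linf) n‖ := rfl
    _ ≤ ‖v - ⟨y, hy⟩‖ := lp.norm_apply_le_norm ENNReal.top_ne_zero _ n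
    _ < ε := by rwa [← dist_eq_norm, dist_comm]

lemma exists_ncard_accPtsL_smul_add_eq_add_one {f v : Linf} (hf : (accPtsL f).Finite)
    (hv : (accPtsL v).Finite) {a₁ a₂ : ℝ} (ha₁ : a₁ ∈ accPtsL f) (ha₂ : a₂ ∈ accPtsL f)
    (hne : a₁ ≠ a₂) (hgap : ∀ a ∈ accPtsL f, ∀ a' ∈ accPtsL f, a ≠ a' → dist a₁ a₂ ≤ dist a a')
    {φ : ℝ → ℝ} (hφ : Continuous φ) (hφ₁ : φ a₁ = 1) (hφ₀ : ∀ a ∈ accPtsL f, a ≠ a₁ → φ a = 0)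
    (hfv : ∀ n, |v n - φ (f n)| ≤ 1 / 8) :
    ∃ c c' : ℝ, (accPtsL (c • f + v)).ncard = (accPtsL (c' • f + v)).ncard + 1 := by
  have hJA : ∀ p ∈ jointAccPts f v, p.1 ∈ accPtsL f := fun p hp => (jointAccPts_subset_prod hp).1
  have hclose : ∀ p ∈ jointAccPts f v, |p.2 - φ p.1| ≤ 1 / 8 := fun p hp =>
    abs_sub_le_of_mem_jointAccPts hφ hfv hp
  simp only [accPtsL_smul_add]
  exact exists_ncard_image_obliqueProj_eq_add_one ((hf.prod hv).subset jointAccPts_subset_prod)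
    hne ha₂ hgap hJA (fun p hp h => by simpa [h, hφ₁] using hclose p hp)
    (fun p hp h => by simpa [hφ₀ _ (hJA p hp) h] using hclose p hp)
    (exists_mem_jointAccPts (isBounded_range_coe v) ha₁)
    (exists_mem_jointAccPts (isBounded_range_coe v) ha₂)

theorem odd_not_densely_lineable :
    ¬ ∃ M : Submodule ℝ Linf, Dense (M : Set Linf) ∧ ¬ Module.Finite ℝ M ∧
      ∀ z ∈ M, z ≠ 0 → (accPtsL z).Finite ∧
        Odd (accPtsL z).ncard ∧ 3 ≤ (accPtsL z).ncard := by
  rintro ⟨M, hM, -, hL⟩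
  have hfin_odd : ∀ z ∈ M, (accPtsL z).Finite ∧ Odd (accPtsL z).ncard := by
    intro z hz
    rcases eq_or_ne z 0 with rfl | hz0
    · simp [accPtsL_zero]
    · exact ⟨(hL z hz hz0).1, (hL z hz hz0).2.1⟩
  obtain ⟨f, hfM, hf⟩ := exists_mem_abs_sub_lt_of_dense hM (y := fun _ => 1)
    (memℓp_infty ⟨1, by rintro _ ⟨n, rfl⟩; simp⟩) one_half_pos
  have hf0 : f ≠ 0 := by
    rintro rfl
    norm_num at hf
  obtain ⟨hAfin, -, hA3⟩ := hL f hfM hf0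
  obtain ⟨a₁, ha₁, a₂, ha₂, hne, hgap⟩ := hAfin.exists_closest_pair (by omega)
  have hr := dist_pos.2 hne
  let φ : ContDiffBump a₁ := ⟨dist a₁ a₂ / 4, dist a₁ a₂ / 2, by positivity, by linarith⟩
  obtain ⟨v, hvM, hv⟩ := exists_mem_abs_sub_lt_of_dense hM (y := fun n => φ (f n))
    (memℓp_infty ⟨1, by rintro _ ⟨n, rfl⟩; simpa [abs_of_nonneg φ.nonneg] using φ.le_one⟩)
    (by norm_num : (0 : ℝ) < 1 / 8)
  obtain ⟨c, c', h⟩ := exists_ncard_accPtsL_smul_add_eq_add_one hAfin (hfin_odd v hvM).1 ha₁ ha₂ hne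
    hgap φ.continuous (φ.one_of_mem_closedBall (Metric.mem_closedBall_self φ.rIn_pos.le))
    (fun a ha h => φ.zero_of_le_dist (show dist a₁ a₂ / 2 ≤ _ by linarith [hgap a ha a₁ ha₁ h]))
    fun n => (hv n).le
  have hodd (c : ℝ) := (hfin_odd _ (M.add_mem (M.smul_mem c hfM) hvM)).2
  exact Nat.odd_add_one.1 (h ▸ hodd c) (hodd c')
end
end

section
/- Let (n_k)_{k≥1} satisfy n_{k+1} > n_k² for all k ≥ 1, and let K ⊆ ℕ be infinite. Then every linear subspace of ℓ∞ contained in L(A) ∪ {0}, where A = {m ≥ 2 : m ∉ [n_k, n_{k+1}) ∀ k ∈ K}, has a countable Hamel basis; in particular L(A) is not densely lineable. -/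
/-!
For `k ∈ K`, the gap `[n k, n (k + 1))` with `n (k + 1) > n k ^ 2` makes the elements of `M` with
fewer than `n k` accumulation points (together with `0`) a subspace: `L (a + b) ⊆ L a + L b` has at
most `|L a| |L b| < n k ^ 2` points, so it lies below the gap again. This subspace is
finite-dimensional. For linearly independent `z₁, …, z_d` in it, consider the finite set
`J ⊆ ℝ^d` of joint accumulation points, so that `L (∑ cᵢ zᵢ) = {c ⬝ᵥ p | p ∈ J}`. If `|J| < d`,
some `c ≠ 0` is orthogonal to `J` and gives a nonzero element with at most one accumulation point;
a `c` injective on `J` gives an element with exactly `|J|` accumulation points. Hence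
`d ≤ |J| < n k`. As `n` is unbounded on `K`, `M` is a countable union of finite-dimensional
subspaces. A dense subspace of countable dimension would make `ℓ∞` separable, but the indicators
of the subsets of `ℕ` are pairwise at distance `1`.
-/

open Filter Topology Set ENNReal

noncomputable section

lemma LinearIndependent.sum_smul_ne_zero {R M ι : Type*} [Ring R] [AddCommGroup M] [Module R M]
    [Fintype ι] {v : ι → M} (hv : LinearIndependent R v) {c : ι → R} (hc : c ≠ 0) :
    ∑ i, c i • v i ≠ 0 :=
  fun h => hc (funext (Fintype.linearIndependent_iff.mp hv c h))

section LinearAlgebra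

variable {K ι : Type*} [Field K] [Fintype ι]

lemma exists_ne_zero_forall_dotProduct_eq_zero {J : Set (ι → K)} (hJ : J.Finite)
    (hlt : J.ncard < Fintype.card ι) : ∃ c ≠ 0, ∀ p ∈ J, c ⬝ᵥ p = 0 := by
  have := hJ.fintype
  have hdep : ¬ LinearIndependent K fun i (p : J) => (p : ι → K) i := fun hli => by
    have := hli.fintype_card_le_finrank
    rw [Module.finrank_fintype_fun_eq_card, ← Nat.card_eq_fintype_card (α := J),
      Nat.card_coe_set_eq] at this
    omega
  obtain ⟨c, hc, i, hi⟩ := Fintype.not_linearIndependent_iff.mp hdep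
  refine ⟨c, fun h => hi (congrFun h i), fun p hp => ?_⟩
  simpa [dotProduct, Finset.sum_apply] using congrFun hc ⟨p, hp⟩

lemma exists_ne_zero_injOn_dotProduct [Infinite K] [Nonempty ι] {J : Set (ι → K)}
    (hJ : J.Finite) : ∃ c ≠ 0, J.InjOn (c ⬝ᵥ ·) := by
  classical
  have := hJ.to_subtype
  -- `f` is nonzero on all differences of points of `J`, and on the constant `1` to force `c ≠ 0`.
  obtain ⟨f, hf⟩ := Module.exists_dual_forall_apply_ne_zero (K := K)
    (Option.elim · (fun _ => 1)
      fun x : {x : J × J // x.1 ≠ x.2} => (x.1.1 : ι → K) - (x.1.2 : ι → K))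
    (by
      rintro (_ | ⟨⟨p, q⟩, hpq⟩)
      · exact fun h => one_ne_zero (congrFun h (Classical.arbitrary ι))
      · exact sub_ne_zero.mpr (Subtype.coe_ne_coe.mpr hpq))
  set c : ι → K := fun i => f fun j => if i = j then 1 else 0
  have hfc : ∀ p, f p = c ⬝ᵥ p := fun p => by
    rw [LinearMap.pi_apply_eq_sum_univ f p]
    simp [dotProduct, c, mul_comm]
  refine ⟨c, fun h0 => hf none (by simp [hfc, h0]), fun p hp q hq hpq => ?_⟩
  by_contra hne
  apply hf (some ⟨(⟨p, hp⟩, ⟨q, hq⟩), by simpa using hne⟩)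
  rw [Option.elim, map_sub, hfc, hfc]
  exact sub_eq_zero.mpr hpq

end LinearAlgebra

lemma exists_mem_lt_of_sq_lt {n : ℕ → ℕ} (hn : ∀ k, 1 ≤ k → n k ^ 2 < n (k + 1)) {K : Set ℕ}
    (hK : K.Infinite) (N : ℕ) : ∃ k ∈ K, 1 ≤ k ∧ N < n k := by
  have hle : ∀ j, j ≤ n (j + 1) := fun j => by
    induction j with
    | zero => exact Nat.zero_le _
    | succ j ih =>
      have := hn (j + 1) (by omega)
      have := Nat.le_self_pow two_ne_zero (n (j + 1))
      omega
  obtain ⟨k, hkK, hk⟩ := hK.exists_gt (N + 1)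
  have := hle (k - 1)
  rw [Nat.sub_add_cancel (by omega)] at this
  exact ⟨k, hkK, by omega, by omega⟩

lemma Submodule.exists_countable_span_eq_iSup {R E ι : Type*} [Semiring R] [AddCommMonoid E]
    [Module R E] [Countable ι] {P : ι → Submodule R E} (hP : ∀ i, (P i).FG) :
    ∃ s : Set E, s.Countable ∧ span R s = ⨆ i, P i := by
  choose S hSfin hS using fun i => Submodule.fg_def.mp (hP i)
  exact ⟨⋃ i, S i, countable_iUnion fun i => (hSfin i).countable, by
    simp only [Submodule.span_iUnion, hS]⟩

open scoped Pointwise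

lemma Linf.norm_apply_le (v : Linf) (m : ℕ) : ‖v m‖ ≤ ‖v‖ :=
  lp.norm_apply_le_norm ENNReal.top_ne_zero v m

lemma Linf.exists_subseq_tendsto (v : Linf) (φ : ℕ → ℕ) :
    ∃ a, ∃ ψ : ℕ → ℕ, StrictMono ψ ∧ Tendsto (fun k => v (φ (ψ k))) atTop (𝓝 a) := by
  obtain ⟨a, -, ψ, hψ, ha⟩ := tendsto_subseq_of_bounded (x := fun k => v (φ k))
    (Metric.isBounded_closedBall (x := 0) (r := ‖v‖))
    fun k => mem_closedBall_zero_iff.mpr (v.norm_apply_le _)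
  exact ⟨a, ψ, hψ, ha⟩

lemma accPtsL_add_subset (a b : Linf) : accPtsL (a + b) ⊆ accPtsL a + accPtsL b := by
  rintro c ⟨φ, hφ, hc⟩
  obtain ⟨α, ψ, hψ, hα⟩ := a.exists_subseq_tendsto φ
  have hβ : Tendsto (fun k => b (φ (ψ k))) atTop (𝓝 (c - α)) := by
    have := (hc.comp hψ.tendsto_atTop).sub hα
    simpa [Function.comp_def] using this
  exact ⟨α, ⟨φ ∘ ψ, hφ.comp hψ, hα⟩, c - α, ⟨φ ∘ ψ, hφ.comp hψ, hβ⟩, add_sub_cancel _ _⟩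

lemma ncard_accPtsL_add_le {a b : Linf} (ha : (accPtsL a).Finite) (hb : (accPtsL b).Finite) :
    (accPtsL (a + b)).ncard ≤ (accPtsL a).ncard * (accPtsL b).ncard := by
  calc (accPtsL (a + b)).ncard ≤ (accPtsL a + accPtsL b).ncard :=
        ncard_le_ncard (accPtsL_add_subset a b) (ha.add hb)
    _ ≤ (accPtsL a ×ˢ accPtsL b).ncard := by
        rw [← image2_add, ← image_prod]; exact ncard_image_le (ha.prod hb)
    _ = _ := ncard_prod

lemma accPtsL_smul {c : ℝ} (hc : c ≠ 0) (v : Linf) : accPtsL (c • v) = (c * ·) '' accPtsL v := by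
  ext a
  constructor
  · rintro ⟨φ, hφ, ha⟩
    refine ⟨c⁻¹ * a, ⟨φ, hφ, ?_⟩, mul_inv_cancel_left₀ hc a⟩
    simpa [inv_mul_cancel_left₀ hc] using ha.const_mul c⁻¹
  · rintro ⟨b, ⟨φ, hφ, hb⟩, rfl⟩
    exact ⟨φ, hφ, by simpa using hb.const_mul c⟩

section JointAccumulation

variable {ι : Type*}

def jointAcc (z : ι → Linf) : Set (ι → ℝ) :=
  {p | ∃ φ : ℕ → ℕ, StrictMono φ ∧ Tendsto (fun k i => z i (φ k)) atTop (𝓝 p)}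

lemma jointAcc_subset_pi (z : ι → Linf) : jointAcc z ⊆ univ.pi fun i => accPtsL (z i) :=
  fun _ ⟨φ, hφ, hp⟩ i _ => ⟨φ, hφ, tendsto_pi_nhds.mp hp i⟩

lemma jointAcc_finite [Finite ι] {z : ι → Linf} (h : ∀ i, (accPtsL (z i)).Finite) :
    (jointAcc z).Finite :=
  (Finite.pi h).subset (jointAcc_subset_pi z)

variable [Fintype ι]

lemma exists_subseq_tendsto_jointAcc (z : ι → Linf) {φ : ℕ → ℕ} (hφ : StrictMono φ) :
    ∃ p ∈ jointAcc z, ∃ ψ : ℕ → ℕ, StrictMono ψ ∧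
      Tendsto (fun k i => z i (φ (ψ k))) atTop (𝓝 p) := by
  have hbound : ∀ k, (fun i => z i (φ k)) ∈ Metric.closedBall 0 (∑ i, ‖z i‖) := fun k =>
    mem_closedBall_zero_iff.mpr <| (pi_norm_le_iff_of_nonneg (by positivity)).mpr fun i =>
      ((z i).norm_apply_le _).trans (Finset.single_le_sum (fun j _ => norm_nonneg (z j))
        (Finset.mem_univ i))
  obtain ⟨p, -, ψ, hψ, hp⟩ := tendsto_subseq_of_bounded Metric.isBounded_closedBall hbound
  exact ⟨p, ⟨φ ∘ ψ, hφ.comp hψ, hp⟩, ψ, hψ, hp⟩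

lemma Linf.sum_smul_apply (c : ι → ℝ) (z : ι → Linf) (m : ℕ) :
    (∑ i, c i • z i) m = c ⬝ᵥ fun i => z i m := by
  rw [lp.coeFn_sum, Finset.sum_apply]
  simp [dotProduct]

lemma accPtsL_sum_smul (c : ι → ℝ) (z : ι → Linf) :
    accPtsL (∑ i, c i • z i) = (c ⬝ᵥ ·) '' jointAcc z := by
  have hcont : Continuous (c ⬝ᵥ · : (ι → ℝ) → ℝ) := continuous_const.dotProduct continuous_id
  ext a
  constructor
  · rintro ⟨φ, hφ, ha⟩
    obtain ⟨p, hp, ψ, hψ, hpψ⟩ := exists_subseq_tendsto_jointAcc z hφ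
    refine ⟨p, hp, tendsto_nhds_unique ((hcont.tendsto p).comp hpψ) ?_⟩
    exact (ha.comp hψ.tendsto_atTop).congr fun k => Linf.sum_smul_apply c z _
  · rintro ⟨p, ⟨φ, hφ, hp⟩, rfl⟩
    exact ⟨φ, hφ, ((hcont.tendsto p).comp hp).congr fun k => (Linf.sum_smul_apply c z _).symm⟩

end JointAccumulation

section RankBound

variable {ι : Type*} [Fintype ι] {P : Submodule ℝ Linf} {z : ι → Linf}

lemma card_le_ncard_jointAcc
    (hP : ∀ v ∈ P, v ≠ 0 → (accPtsL v).Finite ∧ 2 ≤ (accPtsL v).ncard)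
    (hzP : ∀ i, z i ∈ P) (hz : LinearIndependent ℝ z) :
    Fintype.card ι ≤ (jointAcc z).ncard := by
  by_contra! hlt
  obtain ⟨c, hc, hcJ⟩ := exists_ne_zero_forall_dotProduct_eq_zero
    (jointAcc_finite fun i => (hP _ (hzP i) (hz.ne_zero i)).1) hlt
  have hsub : accPtsL (∑ i, c i • z i) ⊆ {0} := by
    rw [accPtsL_sum_smul]
    rintro _ ⟨p, hp, rfl⟩
    exact hcJ p hp
  have h2 := (hP _ (P.sum_mem fun i _ => P.smul_mem _ (hzP i))
    (hz.sum_smul_ne_zero hc)).2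
  have h1 := ncard_le_ncard hsub
  rw [ncard_singleton] at h1
  omega

lemma ncard_jointAcc_lt [Nonempty ι] {N : ℕ}
    (hP : ∀ v ∈ P, v ≠ 0 → (accPtsL v).Finite ∧ (accPtsL v).ncard < N)
    (hzP : ∀ i, z i ∈ P) (hz : LinearIndependent ℝ z) : (jointAcc z).ncard < N := by
  obtain ⟨c, hc, hinj⟩ := exists_ne_zero_injOn_dotProduct
    (jointAcc_finite fun i => (hP _ (hzP i) (hz.ne_zero i)).1)
  rw [← hinj.ncard_image, ← accPtsL_sum_smul]
  exact (hP _ (P.sum_mem fun i _ => P.smul_mem _ (hzP i))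
    (hz.sum_smul_ne_zero hc)).2

end RankBound

lemma rank_le_of_ncard_accPtsL_lt {P : Submodule ℝ Linf} {N : ℕ}
    (hP : ∀ v ∈ P, v ≠ 0 →
      (accPtsL v).Finite ∧ 2 ≤ (accPtsL v).ncard ∧ (accPtsL v).ncard < N) :
    Module.rank ℝ P ≤ N := by
  refine rank_le fun s hs => ?_
  have hz : LinearIndependent ℝ fun i : s => ((i : P) : Linf) := hs.map' P.subtype P.ker_subtype
  have hzP : ∀ i : s, ((i : P) : Linf) ∈ P := fun i => (i : P).2
  rcases isEmpty_or_nonempty s with hempty | hne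
  · simp [Finset.isEmpty_coe_sort.mp hempty]
  · have h1 := card_le_ncard_jointAcc (fun v hv hv0 => (hP v hv hv0).imp_right And.left) hzP hz
    have h2 := ncard_jointAcc_lt (fun v hv hv0 => (hP v hv hv0).imp_right And.right) hzP hz
    rw [Fintype.card_coe] at h1
    omega

def lowAcc (M : Submodule ℝ Linf) (N : ℕ) : Submodule ℝ Linf :=
  Submodule.span ℝ {v | v ∈ M ∧ (accPtsL v).ncard < N}

section Gap

variable {M : Submodule ℝ Linf} {N N' : ℕ}

lemma lowAcc_le : lowAcc M N ≤ M :=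
  Submodule.span_le.mpr fun _ hv => hv.1

lemma mem_lowAcc {v : Linf} (hv : v ∈ M) (h : (accPtsL v).ncard < N) : v ∈ lowAcc M N :=
  Submodule.subset_span ⟨hv, h⟩

lemma ncard_accPtsL_lt_of_mem_lowAcc (hN : N ^ 2 ≤ N')
    (hM : ∀ z ∈ M, z ≠ 0 →
      (accPtsL z).Finite ∧ ¬ (N ≤ (accPtsL z).ncard ∧ (accPtsL z).ncard < N'))
    {v : Linf} (hv : v ∈ lowAcc M N) (hv0 : v ≠ 0) : (accPtsL v).ncard < N := by
  suffices v = 0 ∨ (accPtsL v).ncard < N from this.resolve_left hv0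
  clear hv0
  induction hv using Submodule.span_induction with
  | mem x hx => exact Or.inr hx.2
  | zero => exact Or.inl rfl
  | add x y hx hy ihx ihy =>
    rcases eq_or_ne x 0 with rfl | hx0
    · simpa using ihy
    rcases eq_or_ne y 0 with rfl | hy0
    · simpa using ihx
    rcases eq_or_ne (x + y) 0 with hxy | hxy
    · exact Or.inl hxy
    have hlt : (accPtsL (x + y)).ncard < N' :=
      calc (accPtsL (x + y)).ncard ≤ (accPtsL x).ncard * (accPtsL y).ncard :=
            ncard_accPtsL_add_le (hM x (lowAcc_le hx) hx0).1 (hM y (lowAcc_le hy) hy0).1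
        _ < N ^ 2 := sq N ▸ Nat.mul_lt_mul'' (ihx.resolve_left hx0) (ihy.resolve_left hy0)
        _ ≤ N' := hN
    have := (hM _ (lowAcc_le (add_mem hx hy)) hxy).2
    exact Or.inr (by omega)
  | smul a x hx ihx =>
    rcases eq_or_ne a 0 with rfl | ha
    · exact Or.inl (zero_smul ℝ x)
    refine ihx.imp (fun h => by rw [h, smul_zero]) fun h => ?_
    rwa [accPtsL_smul ha, (mul_right_injective₀ ha).injOn.ncard_image]

end Gap

lemma fg_lowAcc {M : Submodule ℝ Linf} {N N' : ℕ} (hN : N ^ 2 ≤ N')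
    (hM : ∀ z ∈ M, z ≠ 0 → (accPtsL z).Finite ∧ 2 ≤ (accPtsL z).ncard ∧
      ¬ (N ≤ (accPtsL z).ncard ∧ (accPtsL z).ncard < N')) :
    (lowAcc M N).FG := by
  have hrank : Module.rank ℝ (lowAcc M N) ≤ N := rank_le_of_ncard_accPtsL_lt fun v hv hv0 =>
    ⟨(hM v (lowAcc_le hv) hv0).1, (hM v (lowAcc_le hv) hv0).2.1,
      ncard_accPtsL_lt_of_mem_lowAcc hN (fun z hz hz0 => (hM z hz hz0).imp_right And.right) hv hv0⟩
  exact (Submodule.fg_iff_finiteDimensional _).mpr <| IsNoetherian.iff_fg.mp <|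
    IsNoetherian.iff_rank_lt_aleph0.mpr (hrank.trans_lt (Cardinal.natCast_lt_aleph0))

lemma exists_countable_span_eq_of_fast_gaps {n : ℕ → ℕ}
    (hn : ∀ k, 1 ≤ k → n k ^ 2 < n (k + 1)) {K : Set ℕ} (hK : K.Infinite)
    {M : Submodule ℝ Linf}
    (hM : ∀ z ∈ M, z ≠ 0 → (accPtsL z).Finite ∧ 2 ≤ (accPtsL z).ncard ∧
      ∀ k ∈ K, ¬ (n k ≤ (accPtsL z).ncard ∧ (accPtsL z).ncard < n (k + 1))) :
    ∃ s : Set Linf, s.Countable ∧ Submodule.span ℝ s = M := by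
  have hfg : ∀ k : {k // k ∈ K ∧ 1 ≤ k}, (lowAcc M (n k)).FG := fun ⟨k, hkK, hk⟩ =>
    fg_lowAcc (hn k hk).le
      fun z hz hz0 => (hM z hz hz0).imp_right (And.imp_right fun h => h k hkK)
  obtain ⟨s, hs, hspan⟩ := Submodule.exists_countable_span_eq_iSup hfg
  refine ⟨s, hs, hspan.trans (le_antisymm (iSup_le fun _ => lowAcc_le) fun v hv => ?_)⟩
  obtain ⟨k, hkK, hk, hlt⟩ := exists_mem_lt_of_sq_lt hn hK (accPtsL v).ncard
  exact Submodule.mem_iSup_of_mem ⟨k, hkK, hk⟩ (mem_lowAcc hv hlt)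

def Linf.indicator (S : Set ℕ) : Linf :=
  ⟨S.indicator 1, memℓp_infty ⟨1, by
    rintro _ ⟨m, rfl⟩
    simpa using norm_indicator_le_norm_self (s := S) (f := (1 : ℕ → ℝ)) (a := m)⟩⟩

lemma Linf.one_le_dist_indicator {S T : Set ℕ} (h : S ≠ T) :
    1 ≤ dist (Linf.indicator S) (Linf.indicator T) := by
  obtain ⟨m, hm⟩ : ∃ m, ¬ (m ∈ S ↔ m ∈ T) := by
    by_contra! hcon
    exact h (Set.ext hcon)
  have hsub : (Linf.indicator S - Linf.indicator T) m = S.indicator 1 m - T.indicator 1 m := rfl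
  calc (1 : ℝ) = ‖(Linf.indicator S - Linf.indicator T) m‖ := by
        by_cases hS : m ∈ S <;> by_cases hT : m ∈ T <;> simp_all
    _ ≤ dist (Linf.indicator S) (Linf.indicator T) := by
        rw [dist_eq_norm]; exact Linf.norm_apply_le _ m

lemma Linf.not_separableSpace : ¬ TopologicalSpace.SeparableSpace Linf := by
  intro _
  have : Countable (Set ℕ) := Pairwise.countable_of_isOpen_disjoint
    (s := fun S => Metric.ball (Linf.indicator S) (1 / 2))
    (fun S T h => Metric.ball_disjoint_ball (by linarith [Linf.one_le_dist_indicator h]))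
    (fun _ => Metric.isOpen_ball) fun _ => Metric.nonempty_ball.mpr one_half_pos
  obtain ⟨f, hf⟩ := Countable.exists_injective_nat (Set ℕ)
  exact Function.cantor_injective f hf

theorem countable_basis_of_fast_gaps (n : ℕ → ℕ) (hn : ∀ k, 1 ≤ k → n k ^ 2 < n (k + 1))
    (K : Set ℕ) (hK : K.Infinite) :
    (∀ M : Submodule ℝ Linf,
      (∀ z ∈ M, z ≠ 0 → (accPtsL z).Finite ∧ 2 ≤ (accPtsL z).ncard ∧
        ∀ k ∈ K, ¬ (n k ≤ (accPtsL z).ncard ∧ (accPtsL z).ncard < n (k + 1))) →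
      ∃ s : Set Linf, s.Countable ∧ s ⊆ M ∧ M ≤ Submodule.span ℝ s) ∧
    ¬ ∃ M : Submodule ℝ Linf, Dense (M : Set Linf) ∧ ¬ Module.Finite ℝ M ∧
      ∀ z ∈ M, z ≠ 0 → (accPtsL z).Finite ∧ 2 ≤ (accPtsL z).ncard ∧
        ∀ k ∈ K, ¬ (n k ≤ (accPtsL z).ncard ∧ (accPtsL z).ncard < n (k + 1)) := by
  refine ⟨fun M hM => ?_, ?_⟩
  · obtain ⟨s, hs, hspan⟩ := exists_countable_span_eq_of_fast_gaps hn hK hM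
    exact ⟨s, hs, hspan ▸ Submodule.subset_span, hspan.ge⟩
  · rintro ⟨M, hdense, -, hM⟩
    obtain ⟨s, hs, rfl⟩ := exists_countable_span_eq_of_fast_gaps hn hK hM
    exact Linf.not_separableSpace <| TopologicalSpace.isSeparable_univ_iff.mp <|
      hdense.closure_eq ▸ hs.isSeparable.span.closure
end
end

section
/- There exists a closed, non-separable linear subspace M of ℓ∞ such that every nonzero x ∈ M has exactly countably infinitely many accumulation points. -/
/-!
For each real `r`, the ray `n ↦ (n, ⌊n r⌋)` is a sequence of lattice points (encoded in `ℕ`), and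
two distinct rays meet only finitely often. Hence the indicators of the rays are uncountably many
vectors of `ℓ∞` at mutual distance `1`. They lie in the closed subspace of sequences that are Cauchy
along every ray and, for each `ε > 0`, are `ε`-small at all but finitely many indices off finitely
many rays. A nonzero accumulation point of such a sequence is its limit along one of these rays, so
there are only countably many. Finally the isometry `y ↦ (y n / (k + 1))_{(i, n, k)}`, which
repeats each value infinitely often, makes the set of accumulation points of a nonzero vector
infinite while keeping it countable.
-/

open Filter Topology Set ENNReal

noncomputable section

open scoped Pointwise

lemma Filter.cofinite_inf_principal_range_le_map {α β : Type*} (f : α → β) :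
    cofinite ⊓ 𝓟 (range f) ≤ map f cofinite := by
  intro s hs
  rw [mem_inf_principal, mem_cofinite]
  refine ((mem_cofinite.1 hs).image f).subset ?_
  intro b hb
  obtain ⟨⟨a, rfl⟩, ha⟩ := Classical.not_imp.1 hb
  exact mem_image_of_mem f ha

lemma cauchySeq_of_forall_dist_le {X : Type*} [PseudoMetricSpace X] {u : ℕ → X}
    (h : ∀ ε > 0, ∃ v : ℕ → X, CauchySeq v ∧ ∀ n, dist (u n) (v n) ≤ ε) : CauchySeq u := by
  refine Metric.cauchySeq_iff'.2 fun ε hε => ?_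
  obtain ⟨v, hv, huv⟩ := h (ε / 3) (by positivity)
  obtain ⟨N, hN⟩ := Metric.cauchySeq_iff'.1 hv (ε / 3) (by positivity)
  refine ⟨N, fun n hn => ?_⟩
  calc dist (u n) (u N) ≤ dist (u n) (v n) + dist (v n) (v N) + dist (v N) (u N) :=
        dist_triangle4 _ _ _ _
    _ < ε := by linarith [huv n, huv N, hN n hn, dist_comm (u N) (v N)]

lemma not_isSeparable_of_forall_le_dist {X ι : Type*} [PseudoMetricSpace X] [Uncountable ι]
    {s : Set X} {f : ι → X} {δ : ℝ} (hδ : 0 < δ) (hfs : ∀ i, f i ∈ s)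
    (hf : Pairwise fun i j => δ ≤ dist (f i) (f j)) : ¬ TopologicalSpace.IsSeparable s := by
  rintro ⟨c, hc, hsc⟩
  choose g hgc hg using fun i => Metric.mem_closure_iff.1 (hsc (hfs i)) (δ / 2) (half_pos hδ)
  have hg_inj : Function.Injective fun i => (⟨g i, hgc i⟩ : c) := by
    intro i j hij
    by_contra hne
    have hi := hg i
    rw [Subtype.mk.inj hij] at hi
    linarith [hf hne, hg j, dist_triangle_right (f i) (f j) (g j)]
  have := hc.to_subtype
  exact not_countable hg_inj.countable

lemma accPts_subset_closure_range (u : ℕ → ℝ) : accPts u ⊆ closure (range u) := by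
  rintro a ⟨φ, -, hφ⟩
  exact mem_closure_of_tendsto hφ (Eventually.of_forall fun k => mem_range_self (φ k))

lemma closure_range_subset_range_union_accPts (u : ℕ → ℝ) :
    closure (range u) ⊆ range u ∪ accPts u := by
  intro a ha
  by_cases hr : a ∈ range u
  · exact Or.inl hr
  refine Or.inr (MapClusterPt.tendsto_subseq ?_)
  rw [mapClusterPt_atTop_iff_forall_mem_closure]
  intro N
  rw [← image_univ, ← Iio_union_Ici (a := N), image_union, closure_union,
    ((finite_Iio N).image u).isClosed.closure_eq] at ha
  exact ha.resolve_left fun h => hr (image_subset_range _ _ h)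

lemma countable_closure_range_of_countable_accPts {u : ℕ → ℝ} (h : (accPts u).Countable) :
    (closure (range u)).Countable :=
  ((countable_range u).union h).mono (closure_range_subset_range_union_accPts u)

def ray (r : ℝ) (n : ℕ) : ℕ := Encodable.encode (n, ⌊(n : ℝ) * r⌋)

lemma ray_injective (r : ℝ) : Function.Injective (ray r) := fun _ _ h =>
  congrArg Prod.fst (Encodable.encode_injective h)

lemma finite_range_ray_inter_range_ray {r s : ℝ} (h : r ≠ s) :
    (range (ray r) ∩ range (ray s)).Finite := by
  have hrs : 0 < |r - s| := abs_pos.2 (sub_ne_zero.2 h)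
  obtain ⟨N, hN⟩ := exists_nat_gt (|r - s|⁻¹)
  refine ((finite_Iio N).image (ray r)).subset ?_
  rintro _ ⟨⟨n, rfl⟩, ⟨j, hj⟩⟩
  obtain ⟨rfl, hfloor⟩ := Prod.ext_iff.1 (Encodable.encode_injective hj)
  refine ⟨j, mem_Iio.2 ?_, rfl⟩
  have hlt := Int.abs_sub_lt_one_of_floor_eq_floor hfloor.symm
  rw [← mul_sub, abs_mul, Nat.abs_cast] at hlt
  have hN' : 1 < (N : ℝ) * |r - s| := by
    rw [inv_lt_iff_one_lt_mul₀ hrs] at hN; exact hN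
  by_contra! hjN
  have : (N : ℝ) ≤ j := by exact_mod_cast hjN
  nlinarith

def IsRayTame (y : ℕ → ℝ) : Prop :=
  (∀ r, CauchySeq (y ∘ ray r)) ∧
    ∀ ε > 0, ∃ T : Finset ℝ, ∀ᶠ n in cofinite, (∀ r ∈ T, n ∉ range (ray r)) → |y n| < ε

lemma isRayTame_zero : IsRayTame 0 :=
  ⟨fun _ => cauchySeq_const 0, fun ε hε => ⟨∅, Eventually.of_forall fun _ _ => by simpa using hε⟩⟩

lemma IsRayTame.add {y z : ℕ → ℝ} (hy : IsRayTame y) (hz : IsRayTame z) : IsRayTame (y + z) := by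
  refine ⟨fun r => (hy.1 r).add (hz.1 r), fun ε hε => ?_⟩
  obtain ⟨T, hT⟩ := hy.2 (ε / 2) (half_pos hε)
  obtain ⟨T', hT'⟩ := hz.2 (ε / 2) (half_pos hε)
  refine ⟨T ∪ T', ?_⟩
  filter_upwards [hT, hT'] with n h h' hn
  have hyn := h fun r hr => hn r (Finset.mem_union_left _ hr)
  have hzn := h' fun r hr => hn r (Finset.mem_union_right _ hr)
  calc |(y + z) n| ≤ |y n| + |z n| := abs_add_le _ _
    _ < ε := by linarith

lemma IsRayTame.const_smul {y : ℕ → ℝ} (hy : IsRayTame y) (c : ℝ) : IsRayTame (c • y) := by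
  refine ⟨fun r => (uniformContinuous_const_smul c).comp_cauchySeq (hy.1 r), fun ε hε => ?_⟩
  obtain ⟨T, hT⟩ := hy.2 (ε / (|c| + 1)) (by positivity)
  refine ⟨T, hT.mono fun n h hn => ?_⟩
  rw [Pi.smul_apply, smul_eq_mul, abs_mul]
  calc |c| * |y n| ≤ |c| * (ε / (|c| + 1)) := by gcongr; exact (h hn).le
    _ < (|c| + 1) * (ε / (|c| + 1)) := by gcongr; linarith
    _ = ε := by field_simp

lemma isRayTame_of_forall_dist_le {y : ℕ → ℝ}
    (h : ∀ ε > 0, ∃ z, IsRayTame z ∧ ∀ n, dist (y n) (z n) ≤ ε) : IsRayTame y := by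
  refine ⟨fun r => cauchySeq_of_forall_dist_le fun ε hε => ?_, fun ε hε => ?_⟩
  · obtain ⟨z, hz, hyz⟩ := h ε hε
    exact ⟨z ∘ ray r, hz.1 r, fun n => hyz _⟩
  · obtain ⟨z, hz, hyz⟩ := h (ε / 2) (half_pos hε)
    obtain ⟨T, hT⟩ := hz.2 (ε / 2) (half_pos hε)
    refine ⟨T, hT.mono fun n h hn => ?_⟩
    have := abs_sub_abs_le_abs_sub (y n) (z n)
    rw [← Real.dist_eq] at this
    linarith [h hn, hyz n]

lemma isRayTame_indicator_range_ray (s : ℝ) : IsRayTame ((range (ray s)).indicator 1) := by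
  refine ⟨fun r => ?_, fun ε hε => ⟨{s}, Eventually.of_forall fun n hn => ?_⟩⟩
  · rcases eq_or_ne r s with rfl | hrs
    · have : (range (ray r)).indicator 1 ∘ ray r = fun _ => (1 : ℝ) :=
        funext fun n => indicator_of_mem (mem_range_self n) _
      rw [this]
      exact cauchySeq_const 1
    · have hoff : ∀ᶠ n in atTop, ray r n ∉ range (ray s) := by
        rw [← Nat.cofinite_eq_atTop]
        filter_upwards [(ray_injective r).tendsto_cofinite.eventually
          (finite_range_ray_inter_range_ray hrs).compl_mem_cofinite] with n hn hs
        exact hn ⟨mem_range_self n, hs⟩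
      refine (tendsto_const_nhds (x := (0 : ℝ))).congr' ?_ |>.cauchySeq
      filter_upwards [hoff] with n hn
      exact (indicator_of_notMem hn _).symm
  · rw [indicator_of_notMem (hn s (Finset.mem_singleton_self s)), abs_zero]
    exact hε

lemma IsRayTame.exists_tendsto_ray_of_mem_accPts {y : ℕ → ℝ} (hy : IsRayTame y) {a ε : ℝ}
    (hεa : ε < |a|) {T : Finset ℝ}
    (hT : ∀ᶠ n in cofinite, (∀ r ∈ T, n ∉ range (ray r)) → |y n| < ε) (ha : a ∈ accPts y) :
    ∃ r ∈ T, Tendsto (y ∘ ray r) atTop (𝓝 a) := by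
  obtain ⟨φ, hφ, hya⟩ := ha
  have hφ_cofinite : Tendsto φ atTop cofinite :=
    Nat.cofinite_eq_atTop ▸ hφ.injective.tendsto_cofinite
  have hbig : ∀ᶠ k in atTop, ε < |y (φ k)| :=
    ((continuous_abs.tendsto a).comp hya).eventually (lt_mem_nhds hεa)
  obtain ⟨r, hrT, hfreq⟩ : ∃ r ∈ T, ∃ᶠ k in atTop, φ k ∈ range (ray r) := by
    by_contra! h
    obtain ⟨k, hk, hk', hkT⟩ :=
      (hbig.and ((hφ_cofinite.eventually hT).and ((Finset.eventually_all T).2 h))).exists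
    exact (hk' hkT).not_gt hk
  obtain ⟨L, hL⟩ := cauchySeq_tendsto_of_complete (hy.1 r)
  have hyL : Tendsto y (map (ray r) cofinite) (𝓝 L) :=
    tendsto_map'_iff.2 (Nat.cofinite_eq_atTop ▸ hL)
  have := frequently_iff_neBot.1 hfreq
  -- along the indices `k` with `φ k` on `ray r`, `y ∘ φ` is a subsequence of `y ∘ ray r`
  have hφ_ray : Tendsto φ (atTop ⊓ 𝓟 {k | φ k ∈ range (ray r)}) (map (ray r) cofinite) :=
    (tendsto_inf.2 ⟨hφ_cofinite.mono_left inf_le_left, tendsto_principal.2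
      (mem_inf_of_right (mem_principal_self _))⟩).mono_right
      (cofinite_inf_principal_range_le_map _)
  have haL : a = L := tendsto_nhds_unique (hya.mono_left inf_le_left) (hyL.comp hφ_ray)
  exact ⟨r, hrT, haL ▸ hL⟩

lemma IsRayTame.countable_accPts {y : ℕ → ℝ} (hy : IsRayTame y) : (accPts y).Countable := by
  choose T hT using fun m : ℕ => hy.2 (1 / (m + 1)) Nat.one_div_pos_of_nat
  refine ((countable_iUnion fun m => ((T m).finite_toSet.image
    fun r => limUnder atTop (y ∘ ray r)).countable).insert 0).mono fun a ha => ?_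
  rcases eq_or_ne a 0 with rfl | ha0
  · exact mem_insert _ _
  obtain ⟨m, hm⟩ := exists_nat_one_div_lt (abs_pos.2 ha0)
  obtain ⟨r, hr, hlim⟩ := hy.exists_tendsto_ray_of_mem_accPts hm (hT m) ha
  exact mem_insert_of_mem _ (mem_iUnion.2 ⟨m, r, hr, hlim.limUnder_eq⟩)

lemma Linf.norm_apply_le_s17 (y : Linf) (n : ℕ) : ‖y n‖ ≤ ‖y‖ :=
  lp.norm_apply_le_norm ENNReal.top_ne_zero y n

lemma Linf.dist_apply_le (y z : Linf) (n : ℕ) : dist (y n) (z n) ≤ dist y z := by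
  simpa using (lp.lipschitzWith_one_eval ∞ n).dist_le_mul y z

def raySubspace : Submodule ℝ Linf where
  carrier := {y : Linf | IsRayTame y}
  add_mem' {y z} hy hz := show IsRayTame ⇑(y + z) by rw [lp.coeFn_add]; exact hy.add hz
  zero_mem' := show IsRayTame ⇑(0 : Linf) by rw [lp.coeFn_zero]; exact isRayTame_zero
  smul_mem' c y hy := show IsRayTame ⇑(c • y) by rw [lp.coeFn_smul]; exact hy.const_smul c

lemma mem_raySubspace {y : Linf} : y ∈ raySubspace ↔ IsRayTame y := Iff.rfl

lemma isClosed_raySubspace : IsClosed (raySubspace : Set Linf) :=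
  isClosed_of_closure_subset fun y hy => isRayTame_of_forall_dist_le fun ε hε =>
    let ⟨z, hz, hyz⟩ := Metric.mem_closure_iff.1 hy ε hε
    ⟨z, hz, fun n => (Linf.dist_apply_le y z n).trans hyz.le⟩

def rayIndicator (s : ℝ) : Linf :=
  ⟨(range (ray s)).indicator 1, memℓp_infty ⟨1, forall_mem_range.2 fun _ =>
    (norm_indicator_le_norm_self _ _).trans (by simp)⟩⟩

lemma rayIndicator_mem_raySubspace (s : ℝ) : rayIndicator s ∈ raySubspace :=
  isRayTame_indicator_range_ray s

lemma one_le_dist_rayIndicator {s t : ℝ} (h : s ≠ t) :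
    1 ≤ dist (rayIndicator s) (rayIndicator t) := by
  obtain ⟨_, ⟨n, rfl⟩, hn⟩ := ((infinite_range_of_injective (ray_injective s)).sdiff
    (finite_range_ray_inter_range_ray h)).nonempty
  have hnt : ray s n ∉ range (ray t) := fun ht => hn ⟨mem_range_self n, ht⟩
  calc (1 : ℝ) = dist (rayIndicator s (ray s n)) (rayIndicator t (ray s n)) := by
        simp [rayIndicator, indicator_of_notMem hnt]
    _ ≤ _ := Linf.dist_apply_le _ _ _

def spread (y : ℕ → ℝ) (m : ℕ) : ℝ :=
  y (Nat.unpair (Nat.unpair m).2).1 / ((Nat.unpair (Nat.unpair m).2).2 + 1)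

@[simp]
lemma spread_pair (y : ℕ → ℝ) (i n k : ℕ) :
    spread y (Nat.pair i (Nat.pair n k)) = y n / (k + 1) := by
  simp [spread]

lemma abs_spread_le (y : ℕ → ℝ) (m : ℕ) :
    |spread y m| ≤ |y (Nat.unpair (Nat.unpair m).2).1| := by
  rw [spread, abs_div]
  exact div_le_self (abs_nonneg _) (by rw [abs_of_pos (by positivity)]; simp)

def spreadₗᵢ : Linf →ₗᵢ[ℝ] Linf where
  toFun y := ⟨spread y, memℓp_infty ⟨‖y‖, forall_mem_range.2 fun m =>
    (abs_spread_le y m).trans (Linf.norm_apply_le_s17 y _)⟩⟩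
  map_add' y z := lp.ext <| funext fun m => by
    simp only [lp.coeFn_add, Pi.add_apply, spread, add_div]
  map_smul' c y := lp.ext <| funext fun m => by
    simp only [lp.coeFn_smul, Pi.smul_apply, smul_eq_mul, spread, mul_div_assoc,
      RingHom.id_apply]
  norm_map' y := le_antisymm
    (lp.norm_le_of_forall_le (norm_nonneg y) fun m =>
      (abs_spread_le y m).trans (Linf.norm_apply_le_s17 y _))
    (lp.norm_le_of_forall_le (norm_nonneg _) fun n =>
      (le_of_eq (by simp)).trans (Linf.norm_apply_le_s17 _ (Nat.pair 0 (Nat.pair n 0))))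

lemma spreadₗᵢ_apply (y : Linf) (m : ℕ) : spreadₗᵢ y m = spread y m := rfl

lemma accPtsL_spreadₗᵢ_subset (y : Linf) :
    accPtsL (spreadₗᵢ y) ⊆
      closure (range y) * insert 0 (range fun k : ℕ => 1 / ((k : ℝ) + 1)) := by
  have hK : IsCompact (insert 0 (range fun k : ℕ => 1 / ((k : ℝ) + 1))) :=
    tendsto_one_div_add_atTop_nhds_zero_nat.isCompact_insert_range
  have hY : IsCompact (closure (range y)) :=
    (Metric.isBounded_closedBall.subset (range_subset_iff.2 fun n =>
      mem_closedBall_zero_iff.2 (Linf.norm_apply_le_s17 y n))).isCompact_closure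
  refine (accPts_subset_closure_range _).trans (closure_minimal ?_ (hY.mul hK).isClosed)
  rintro _ ⟨m, rfl⟩
  show spread y m ∈ _
  rw [spread, div_eq_mul_one_div]
  exact mul_mem_mul (subset_closure (mem_range_self _)) (mem_insert_of_mem _ (mem_range_self _))

lemma countable_accPtsL_spreadₗᵢ {y : Linf} (hy : (accPts y).Countable) :
    (accPtsL (spreadₗᵢ y)).Countable := by
  refine Countable.mono (accPtsL_spreadₗᵢ_subset y) ?_
  rw [← image2_mul]
  exact (countable_closure_range_of_countable_accPts hy).image2 ((countable_range _).insert 0) _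

lemma infinite_accPtsL_spreadₗᵢ {y : Linf} (hy : y ≠ 0) : (accPtsL (spreadₗᵢ y)).Infinite := by
  obtain ⟨n, hn⟩ : ∃ n, y n ≠ 0 := by
    by_contra! h
    exact hy (lp.ext (funext h))
  refine infinite_of_injective_forall_mem (f := fun k : ℕ => y n / (k + 1)) ?_ fun k => ?_
  · intro k l hkl
    rw [div_eq_div_iff (by positivity) (by positivity), mul_right_inj' hn] at hkl
    exact Nat.cast_injective (R := ℝ) (add_right_cancel hkl).symm
  · refine ⟨fun i => Nat.pair i (Nat.pair n k), fun i j hij => Nat.pair_lt_pair_left _ hij, ?_⟩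
    simp only [spreadₗᵢ_apply, spread_pair]
    exact tendsto_const_nhds

theorem exists_closed_nonseparable_subspace :
    ∃ M : Submodule ℝ Linf, IsClosed (M : Set Linf) ∧
      ¬ TopologicalSpace.IsSeparable (M : Set Linf) ∧
      ∀ x ∈ M, x ≠ 0 → (accPtsL x).Countable ∧ (accPtsL x).Infinite := by
  refine ⟨raySubspace.map spreadₗᵢ.toLinearMap, ?_, ?_, ?_⟩
  · rw [Submodule.map_coe]
    exact spreadₗᵢ.isometry.isClosedEmbedding.isClosedMap _ isClosed_raySubspace
  · refine not_isSeparable_of_forall_le_dist one_pos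
      (fun s => Submodule.mem_map_of_mem (rayIndicator_mem_raySubspace s)) fun s t hst =>
      (one_le_dist_rayIndicator hst).trans_eq (spreadₗᵢ.dist_map _ _).symm
  · rintro _ ⟨y, hy, rfl⟩ hx
    refine ⟨countable_accPtsL_spreadₗᵢ (mem_raySubspace.1 hy).countable_accPts,
      infinite_accPtsL_spreadₗᵢ ?_⟩
    rintro rfl
    exact hx (map_zero _)
end
end
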